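/- arXiv:math/0202043 — 7 statements merged into one kernel-verified Lean document; each statement's English description precedes it below -/
import Mathlib

section
/- Let U be a commutative ring of characteristic 3 with a derivation ∂, and define ω(a,b) = ∂²(a)∂³(b) − ∂³(a)∂²(b). Then ω satisfies the Jacobi identity: ω(ω(a,b),c) + ω(ω(b,c),a) + ω(ω(c,a),b) = 0, so (U, ω) is a Lie algebra. -/
/-- In a commutative ring `U` of characteristic 3 with a derivation `D`,
`ω(a,b) = D²a·D³b − D³a·D²b` satisfies the Jacobi identity. -/
theorem stmt_1 (U : Type*) [CommRing U] (h3 : (3 : U) = 0) (D : U → U)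
    (hadd : ∀ a b : U, D (a + b) = D a + D b)
    (hleib : ∀ a b : U, D (a * b) = D a * b + a * D b)
    (ω : U → U → U)
    (hω : ∀ a b : U, ω a b = D^[2] a * D^[3] b - D^[3] a * D^[2] b) :
    ∀ a b c : U, ω (ω a b) c + ω (ω b c) a + ω (ω c a) b = 0 := by
  have hD0 : D 0 = 0 := by
    have := hadd 0 0
    simp at this
    exact this
  have hneg : ∀ x : U, D (-x) = -D x := by
    intro x
    have h := hadd x (-x)
    simp [hD0] at h
    exact eq_neg_of_add_eq_zero_right h.symm
  have hsub : ∀ x y : U, D (x - y) = D x - D y := by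
    intro x y
    rw [sub_eq_add_neg, hadd, hneg, sub_eq_add_neg]
  have h2 : ∀ x : U, D^[2] x = D (D x) := fun x => rfl
  have h3' : ∀ x : U, D^[3] x = D (D (D x)) := fun x => rfl
  intro a b c
  simp only [hω, h2, h3', hsub, hadd, hleib]
  set a1 := D a with ha1
  set a2 := D a1 with ha2
  set a3 := D a2 with ha3
  set a4 := D a3 with ha4
  set a5 := D a4 with ha5
  set a6 := D a5 with ha6
  set b1 := D b with hb1
  set b2 := D b1 with hb2
  set b3 := D b2 with hb3
  set b4 := D b3 with hb4
  set b5 := D b4 with hb5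
  set b6 := D b5 with hb6
  set c1 := D c with hc1
  set c2 := D c1 with hc2
  set c3 := D c2 with hc3
  set c4 := D c3 with hc4
  set c5 := D c4 with hc5
  set c6 := D c5 with hc6
  linear_combination (- a2*b3*c5 + a2*b5*c3 + a3*b2*c5 - a3*b5*c2 - a5*b2*c3 + a5*b3*c2) * h3
end

section
/- Let U be a commutative ring of characteristic 2 with a derivation ∂, and let k ≥ 1. Define ω(a,b) = ∂^{2^k}(a)·∂^{2^k−1}(b) + ∂^{2^k−1}(a)·∂^{2^k}(b) (signs coincide in characteristic 2). Then ω satisfies the Jacobi identity ω(ω(a,b),c) + ω(ω(b,c),a) + ω(ω(c,a),b) = 0. -/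
/-- In a commutative ring `U` of characteristic 2 with a derivation `D`, for `k ≥ 1`,
`ω(a,b) = D^{2^k}a·D^{2^k−1}b + D^{2^k−1}a·D^{2^k}b` satisfies the Jacobi identity. -/
theorem stmt_2 (U : Type*) [CommRing U] (h2 : (2 : U) = 0) (D : U → U)
    (hadd : ∀ a b : U, D (a + b) = D a + D b)
    (hleib : ∀ a b : U, D (a * b) = D a * b + a * D b)
    (k : ℕ) (hk : 1 ≤ k) (ω : U → U → U)
    (hω : ∀ a b : U, ω a b = D^[2 ^ k] a * D^[2 ^ k - 1] b + D^[2 ^ k - 1] a * D^[2 ^ k] b) :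
    ∀ a b c : U, ω (ω a b) c + ω (ω b c) a + ω (ω c a) b = 0 := by
  have two_cancel : ∀ z : U, z + z = 0 := fun z => by
    have : (2 : U) * z = 0 := by rw [h2, zero_mul]
    rwa [two_mul] at this
  -- iterates are additive
  have haddn : ∀ (n : ℕ) (x y : U), D^[n] (x + y) = D^[n] x + D^[n] y := by
    intro n
    induction n with
    | zero => intro x y; simp
    | succ n ih =>
      intro x y
      rw [Function.iterate_succ_apply, hadd, ih, ← Function.iterate_succ_apply D n x,
        ← Function.iterate_succ_apply D n y]
  -- D^[2^n] is a derivation (char 2)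
  have hE : ∀ (n : ℕ) (x y : U),
      D^[2 ^ n] (x * y) = D^[2 ^ n] x * y + x * D^[2 ^ n] y := by
    intro n
    induction n with
    | zero => intro x y; simpa using hleib x y
    | succ n ih =>
      intro x y
      have h1 : 2 ^ (n + 1) = 2 ^ n + 2 ^ n := by ring
      rw [h1, Function.iterate_add_apply, ih, haddn, ih, ih,
        Function.iterate_add_apply D (2 ^ n) (2 ^ n) x,
        Function.iterate_add_apply D (2 ^ n) (2 ^ n) y]
      have := two_cancel (D^[2 ^ n] x * D^[2 ^ n] y)
      linear_combination this
  obtain ⟨m, hm⟩ : ∃ m, 2 ^ k = m + 1 :=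
    ⟨2 ^ k - 1, (Nat.succ_pred_eq_of_pos (pow_pos two_pos k)).symm⟩
  have hm' : 2 ^ k - 1 = m := by omega
  -- ω x y = D (D^[m] x * D^[m] y)
  have hω' : ∀ x y : U, ω x y = D (D^[m] x * D^[m] y) := by
    intro x y
    rw [hω, hm', hm, hleib, Function.iterate_succ_apply' D m x,
      Function.iterate_succ_apply' D m y]
  -- D^[m] ω
  have hDm : ∀ x y : U,
      D^[m] (ω x y) = D^[m + m + 1] x * D^[m] y + D^[m] x * D^[m + m + 1] y := by
    intro x y
    rw [hω', ← Function.iterate_succ_apply D m, Nat.succ_eq_add_one, ← hm, hE k,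
      ← Function.iterate_add_apply, ← Function.iterate_add_apply, hm]
    ring_nf
  -- D^[2^k] ω
  have hDM : ∀ x y : U,
      D^[2 ^ k] (ω x y) = D^[m + m + 2] x * D^[m] y + D^[m + m + 1] x * D^[m + 1] y
        + D^[m + 1] x * D^[m + m + 1] y + D^[m] x * D^[m + m + 2] y := by
    intro x y
    rw [hm, Function.iterate_succ_apply' D m, hDm, hadd, hleib, hleib,
      Function.iterate_succ_apply' D (m + m + 1) x,
      Function.iterate_succ_apply' D (m + m + 1) y,
      Function.iterate_succ_apply' D m x,
      Function.iterate_succ_apply' D m y]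
    ring_nf
  intro a b c
  rw [hω (ω a b) c, hω (ω b c) a, hω (ω c a) b, hm',
    hDm a b, hDm b c, hDm c a, hDM a b, hDM b c, hDM c a, hm,
    Function.iterate_succ_apply' D m a,
    Function.iterate_succ_apply' D m b,
    Function.iterate_succ_apply' D m c,
    ← Function.iterate_succ_apply' D m a,
    ← Function.iterate_succ_apply' D m b,
    ← Function.iterate_succ_apply' D m c]
  linear_combination h2 *
    ( D^[m + m + 2] a * D^[m] b * D^[m] c
    + D^[m + 1] a * D^[m + m + 1] b * D^[m] c
    + D^[m + m + 1] a * D^[m + 1] b * D^[m] c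
    + D^[m] a * D^[m + m + 2] b * D^[m] c
    + D^[m] a * D^[m + m + 1] b * D^[m + 1] c
    + D^[m + m + 1] a * D^[m] b * D^[m + 1] c
    + D^[m] a * D^[m + 1] b * D^[m + m + 1] c
    + D^[m] a * D^[m] b * D^[m + m + 2] c
    + D^[m + 1] a * D^[m] b * D^[m + m + 1] c)
end

section
/- Let ∂ be the special derivation x^{(i)} ↦ x^{(i−1)} of the divided power algebra O₁(m) over a field of characteristic p > 0, with p^m > q. If the q-th iterate ∂^q is a derivation of O₁(m), then q is a power of p. -/
/-- If `p` divides every interior binomial coefficient `q.choose i` (for `0 < i < q`),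
then `q` is a power of `p`. -/
theorem aux_pow_of_dvd_choose (p : ℕ) [Fact p.Prime] :
    ∀ q, 0 < q → (∀ i, 0 < i → i < q → p ∣ q.choose i) → ∃ t, q = p ^ t := by
  intro q
  induction q using Nat.strong_induction_on with
  | _ q ih =>
    intro hq hdvd
    have hp : p.Prime := Fact.out
    rcases eq_or_lt_of_le (show 1 ≤ q from hq) with h1 | h1
    · exact ⟨0, by rw [pow_zero]; omega⟩
    · have hpq : p ∣ q := by
        simpa [Nat.choose_one_right] using hdvd 1 one_pos h1
      obtain ⟨q', rfl⟩ := hpq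
      have hq' : 0 < q' := Nat.pos_of_ne_zero fun h => by subst h; simp at hq
      have key : ∀ i, 0 < i → i < q' → p ∣ q'.choose i := by
        intro i hi hi'
        have h2 : p ∣ (p * q').choose (p * i) :=
          hdvd (p * i) (Nat.mul_pos hp.pos hi) ((Nat.mul_lt_mul_left hp.pos).mpr hi')
        have hl := Choose.choose_modEq_choose_mod_mul_choose_div_nat
          (p := p) (n := p * q') (k := p * i)
        rw [Nat.mul_mod_right, Nat.mul_mod_right, Nat.mul_div_cancel_left _ hp.pos,
          Nat.mul_div_cancel_left _ hp.pos, Nat.choose_self, one_mul] at hl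
        have h3 : (p * q').choose (p * i) ≡ 0 [MOD p] :=
          (Nat.modEq_zero_iff_dvd).mpr h2
        exact (Nat.modEq_zero_iff_dvd).mp (hl.symm.trans h3)
      have hlt : q' < p * q' := by
        have := hp.two_le
        calc q' = 1 * q' := (one_mul q').symm
          _ < p * q' := (Nat.mul_lt_mul_right hq').mpr (by omega)
      obtain ⟨t, ht⟩ := ih q' hlt hq' key
      exact ⟨t + 1, by rw [ht, pow_succ, mul_comm]⟩

/-- Let `A = O₁(m)` be the divided power algebra over a field `K` of characteristic `p > 0`,
with basis `x^{(0)}, …, x^{(p^m−1)}`, product `x^{(i)}x^{(j)} = C(i+j,i)x^{(i+j)}`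
(zero if `i+j ≥ p^m`), and special derivation `D : x^{(i)} ↦ x^{(i−1)}`.
If `q < p^m` and the `q`-th iterate `D^[q]` is a derivation of `A`,
then `q` is a power of `p`. -/
theorem stmt_4 (K : Type*) [Field K] (p : ℕ) [Fact p.Prime] [CharP K p] (m q : ℕ)
    (A : Type*) [CommRing A] [Algebra K A] (e : Module.Basis (Fin (p ^ m)) K A)
    (hmul : ∀ i j : Fin (p ^ m), (e i : A) * e j =
      if h : (i : ℕ) + (j : ℕ) < p ^ m then
        ((((i : ℕ) + (j : ℕ)).choose (i : ℕ) : K)) • e ⟨(i : ℕ) + (j : ℕ), h⟩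
      else 0)
    (D : A →ₗ[K] A)
    (hD : ∀ i : Fin (p ^ m), D (e i) =
      if 1 ≤ (i : ℕ) then e ⟨(i : ℕ) - 1, lt_of_le_of_lt (Nat.sub_le _ _) i.isLt⟩ else 0)
    (hq : q < p ^ m)
    (hder : ∀ a b : A, (⇑D)^[q] (a * b) = (⇑D)^[q] a * b + a * (⇑D)^[q] b) :
    ∃ t : ℕ, q = p ^ t := by
  have hp : p.Prime := Fact.out
  have hpm : 0 < p ^ m := pow_pos hp.pos m
  -- iterates of D on basis vectors
  have iter : ∀ n (i : Fin (p ^ m)), (⇑D)^[n] (e i) =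
      if h : n ≤ (i : ℕ) then
        e ⟨(i : ℕ) - n, lt_of_le_of_lt (Nat.sub_le _ _) i.isLt⟩ else 0 := by
    intro n
    induction n with
    | zero =>
      intro i
      simp
    | succ n ihn =>
      intro i
      rw [Function.iterate_succ_apply', ihn]
      by_cases h : n ≤ (i : ℕ)
      · rw [dif_pos h, hD]
        by_cases h' : n + 1 ≤ (i : ℕ)
        · rw [if_pos (show 1 ≤ (i : ℕ) - n by omega), dif_pos h']
          congr 1
        · rw [if_neg (show ¬ (1 ≤ (i : ℕ) - n) by omega), dif_neg h']
      · rw [dif_neg h, map_zero, dif_neg (by omega)]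
  have hsm : ∀ (c : K) (x : A), (⇑D)^[q] (c • x) = c • (⇑D)^[q] x := by
    intro c x
    rw [← Module.End.pow_apply, map_smul, Module.End.pow_apply]
  rcases Nat.eq_zero_or_pos q with rfl | hq0
  · -- q = 0 : impossible
    exfalso
    have h0 := hder (e ⟨0, hpm⟩) (e ⟨0, hpm⟩)
    simp only [Function.iterate_zero, id_eq] at h0
    have h1 : e ⟨0, hpm⟩ * e ⟨0, hpm⟩ = 0 := by linear_combination -h0
    have h2 := hmul ⟨0, hpm⟩ ⟨0, hpm⟩
    rw [dif_pos (show (0 : ℕ) + 0 < p ^ m by simpa using hpm)] at h2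
    rw [h1] at h2
    exact Module.Basis.ne_zero e _ (by simpa using h2.symm)
  · -- q ≥ 1
    apply aux_pow_of_dvd_choose p q hq0
    intro i hi0 hiq
    have hfi : i < p ^ m := lt_trans hiq hq
    have hfj : q - i < p ^ m := lt_of_le_of_lt (Nat.sub_le _ _) hq
    set fi : Fin (p ^ m) := ⟨i, hfi⟩
    set fj : Fin (p ^ m) := ⟨q - i, hfj⟩
    have hij : (fi : ℕ) + (fj : ℕ) = q := by simp [fi, fj]; omega
    have hmul' : e fi * e fj = ((q.choose i : K)) • e ⟨q, hq⟩ := by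
      rw [hmul, dif_pos (show (fi : ℕ) + (fj : ℕ) < p ^ m by rw [hij]; exact hq)]
      congr 1
      · rw [hij]
      · congr 1
        ext
        simp [hij]
    have hd := hder (e fi) (e fj)
    rw [iter q fi, iter q fj, dif_neg (show ¬ q ≤ (fi : ℕ) by simp [fi]; omega),
      dif_neg (show ¬ q ≤ (fj : ℕ) by simp [fj]; omega), zero_mul, mul_zero, add_zero,
      hmul', hsm, iter q ⟨q, hq⟩, dif_pos (le_refl q)] at hd
    have hzero : (q.choose i : K) = 0 := by
      by_contra hne
      exact Module.Basis.ne_zero e _ ((smul_eq_zero_iff_right hne).mp hd)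
    exact (CharP.cast_eq_zero_iff K p _).mp hzero
end

section
/- Let p = 3 and let ∂ be the special derivation of O₁(m) over a field of characteristic 3. If k > 1 (and 3^k < 3^m), then the bilinear map ψ(a,b) = ∂^{3^k−1}(a)∂^{3^k}(b) − ∂^{3^k}(a)∂^{3^k−1}(b) does NOT satisfy the Jacobi identity; explicitly, the Jacobiator ψ(a, ψ(b,c)) − ψ(ψ(a,b), c) − ψ(b, ψ(a,c)) is nonzero when evaluated at a = x^{(3^k)}, b = x^{(3^k+1)}, c = x^{(2·3^k−3)}. -/
/-- In the divided power algebra `O₁(m)` over a field of characteristic 3, for `k > 1`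
(with `3^m` large enough that all occurring indices are `< 3^m`), the bilinear map
`ψ(a,b) = D^{3^k−1}a·D^{3^k}b − D^{3^k}a·D^{3^k−1}b` does not satisfy the Jacobi
identity: the Jacobiator `ψ(a, ψ(b,c)) − ψ(ψ(a,b), c) − ψ(b, ψ(a,c))` is nonzero at
`a = x^{(3^k)}`, `b = x^{(3^k+1)}`, `c = x^{(2·3^k−3)}`. -/
theorem stmt_7 (K : Type*) [Field K] [CharP K 3] (m k : ℕ) (hk : 1 < k)
    (A : Type*) [CommRing A] [Algebra K A] (e : Module.Basis (Fin (3 ^ m)) K A)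
    (hmul : ∀ i j : Fin (3 ^ m), (e i : A) * e j =
      if h : (i : ℕ) + (j : ℕ) < 3 ^ m then
        ((((i : ℕ) + (j : ℕ)).choose (i : ℕ) : K)) • e ⟨(i : ℕ) + (j : ℕ), h⟩
      else 0)
    (D : A →ₗ[K] A)
    (hD : ∀ i : Fin (3 ^ m), D (e i) =
      if 1 ≤ (i : ℕ) then e ⟨(i : ℕ) - 1, lt_of_le_of_lt (Nat.sub_le _ _) i.isLt⟩ else 0)
    (hm : 2 * 3 ^ k < 3 ^ m)
    (ψ : A → A → A)
    (hψ : ∀ a b : A,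
      ψ a b = (⇑D)^[3 ^ k - 1] a * (⇑D)^[3 ^ k] b - (⇑D)^[3 ^ k] a * (⇑D)^[3 ^ k - 1] b) :
    ψ (e ⟨3 ^ k, by have := Nat.one_le_two_pow (n := k); omega⟩)
        (ψ (e ⟨3 ^ k + 1, by have : 1 ≤ 3 ^ k := Nat.one_le_pow k 3 (by norm_num); omega⟩)
           (e ⟨2 * 3 ^ k - 3, by omega⟩))
      - ψ (ψ (e ⟨3 ^ k, by have : 1 ≤ 3 ^ k := Nat.one_le_pow k 3 (by norm_num); omega⟩)
             (e ⟨3 ^ k + 1, by have : 1 ≤ 3 ^ k := Nat.one_le_pow k 3 (by norm_num); omega⟩))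
          (e ⟨2 * 3 ^ k - 3, by omega⟩)
      - ψ (e ⟨3 ^ k + 1, by have : 1 ≤ 3 ^ k := Nat.one_le_pow k 3 (by norm_num); omega⟩)
          (ψ (e ⟨3 ^ k, by have : 1 ≤ 3 ^ k := Nat.one_le_pow k 3 (by norm_num); omega⟩)
             (e ⟨2 * 3 ^ k - 3, by omega⟩)) ≠ 0 := by
  
  have h9 : 9 ≤ 3 ^ k := by
    calc (9:ℕ) = 3 ^ 2 := by norm_num
    _ ≤ 3 ^ k := Nat.pow_le_pow_right (by norm_num) hk
  have h3K : (3 : K) = 0 := by exact_mod_cast CharP.cast_eq_zero K 3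
  have hqK : ((3 ^ k : ℕ) : K) = 0 := by
    push_cast
    rw [h3K]
    exact zero_pow (by omega)
  have hiter : ∀ (n : ℕ) (i : Fin (3 ^ m)), (⇑D)^[n] (e i) =
      if h : n ≤ (i : ℕ) then e ⟨(i : ℕ) - n, lt_of_le_of_lt (Nat.sub_le _ _) i.isLt⟩
      else 0 := by
    intro n
    induction n with
    | zero => intro i; simp
    | succ n ih =>
      intro i
      rw [Function.iterate_succ_apply', ih i]
      by_cases h1 : n ≤ (i : ℕ)
      · rw [dif_pos h1, hD]
        by_cases h2 : n + 1 ≤ (i : ℕ)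
        · rw [if_pos (by simp; omega), dif_pos h2]
          congr 1
        · rw [if_neg (by simp; omega), dif_neg h2]
      · rw [dif_neg h1, map_zero, dif_neg (by omega)]
  have hiterP : ∀ (n i j : ℕ) (hi : i < 3 ^ m) (hj : j < 3 ^ m),
      n ≤ i → i - n = j → (⇑D)^[n] (e ⟨i, hi⟩) = e ⟨j, hj⟩ := by
    intro n i j hi hj hni hij
    rw [hiter n ⟨i, hi⟩, dif_pos hni]
    congr 1
    ext
    simpa using hij
  have hiter0 : ∀ (n i : ℕ) (hi : i < 3 ^ m), i < n → (⇑D)^[n] (e ⟨i, hi⟩) = 0 := by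
    intro n i hi h
    rw [hiter n ⟨i, hi⟩, dif_neg (by simp; omega)]
  have hmul' : ∀ (i j s : ℕ) (hi : i < 3 ^ m) (hj : j < 3 ^ m) (hs : s < 3 ^ m),
      i + j = s → e ⟨i, hi⟩ * e ⟨j, hj⟩ = ((s.choose i : K)) • e ⟨s, hs⟩ := by
    intro i j s hi hj hs hijs
    subst hijs
    rw [hmul, dif_pos (by simpa using hs)]
  have hsmul : ∀ (n : ℕ) (c : K) (x : A), (⇑D)^[n] (c • x) = c • (⇑D)^[n] x := by
    intro n
    induction n with
    | zero => intros; rfl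
    | succ n ih => intro c x; simp only [Function.iterate_succ_apply, map_smul, ih]
  have hD0 : ∀ n : ℕ, (⇑D)^[n] (0 : A) = 0 := fun n => Function.iterate_fixed (map_zero D) n
  have h2ne : (2 : K) ≠ 0 := by
    have : (2 : K) = -1 := by linear_combination h3K
    rw [this]
    simp
  -- ψ a b = e 2
  have hab : ψ (e ⟨3 ^ k, by omega⟩) (e ⟨3 ^ k + 1, by omega⟩) = e ⟨2, by omega⟩ := by
    rw [hψ,
      hiterP (3 ^ k - 1) (3 ^ k) 1 (by omega) (by omega) (by omega) (by omega),
      hiterP (3 ^ k) (3 ^ k + 1) 1 (by omega) (by omega) (by omega) (by omega),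
      hiterP (3 ^ k) (3 ^ k) 0 (by omega) (by omega) (by omega) (by omega),
      hiterP (3 ^ k - 1) (3 ^ k + 1) 2 (by omega) (by omega) (by omega) (by omega),
      hmul' 1 1 2 (by omega) (by omega) (by omega) (by omega),
      hmul' 0 2 2 (by omega) (by omega) (by omega) (by omega),
      ← sub_smul]
    norm_num
  -- ψ b c = 2 • e (3^k - 1)
  have hc2 : (((3 ^ k - 1).choose 2 : ℕ) : K) = 1 := by
    have hdvd : 2 ∣ (3 ^ k - 1) * (3 ^ k - 1 - 1) := by
      have h := Nat.even_mul_succ_self (3 ^ k - 2)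
      have he : (3 ^ k - 2) * (3 ^ k - 2 + 1) = (3 ^ k - 1) * (3 ^ k - 1 - 1) := by
        rw [mul_comm]
        congr 1 <;> omega
      rw [he] at h
      exact h.two_dvd
    have key : 2 * ((3 ^ k - 1).choose 2) = (3 ^ k - 1) * (3 ^ k - 1 - 1) := by
      rw [Nat.choose_two_right, Nat.mul_div_cancel' hdvd]
    have keyK := congrArg (Nat.cast : ℕ → K) key
    push_cast [Nat.cast_sub (show 1 ≤ 3 ^ k by omega),
      Nat.cast_sub (show (1:ℕ) ≤ 3 ^ k - 1 by omega)] at keyK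
    rw [h3K, zero_pow (show k ≠ 0 by omega)] at keyK
    apply mul_left_cancel₀ h2ne
    rw [keyK]
    ring
  have hc1 : (((3 ^ k - 1).choose 1 : ℕ) : K) = -1 := by
    rw [Nat.choose_one_right, Nat.cast_sub (show 1 ≤ 3 ^ k by omega), hqK]
    simp
  have hbc : ψ (e ⟨3 ^ k + 1, by omega⟩) (e ⟨2 * 3 ^ k - 3, by omega⟩)
      = (2 : K) • e ⟨3 ^ k - 1, by omega⟩ := by
    rw [hψ,
      hiterP (3 ^ k - 1) (3 ^ k + 1) 2 (by omega) (by omega) (by omega) (by omega),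
      hiterP (3 ^ k) (2 * 3 ^ k - 3) (3 ^ k - 3) (by omega) (by omega) (by omega) (by omega),
      hiterP (3 ^ k) (3 ^ k + 1) 1 (by omega) (by omega) (by omega) (by omega),
      hiterP (3 ^ k - 1) (2 * 3 ^ k - 3) (3 ^ k - 2) (by omega) (by omega) (by omega) (by omega),
      hmul' 2 (3 ^ k - 3) (3 ^ k - 1) (by omega) (by omega) (by omega) (by omega),
      hmul' 1 (3 ^ k - 2) (3 ^ k - 1) (by omega) (by omega) (by omega) (by omega),
      ← sub_smul, hc2, hc1]
    norm_num
  -- ψ a (2 • e (3^k-1)) = e 0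
  have habc : ψ (e ⟨3 ^ k, by omega⟩) ((2 : K) • e ⟨3 ^ k - 1, by omega⟩)
      = e ⟨0, by omega⟩ := by
    rw [hψ, hsmul, hsmul,
      hiterP (3 ^ k - 1) (3 ^ k) 1 (by omega) (by omega) (by omega) (by omega),
      hiter0 (3 ^ k) (3 ^ k - 1) (by omega) (by omega),
      hiterP (3 ^ k) (3 ^ k) 0 (by omega) (by omega) (by omega) (by omega),
      hiterP (3 ^ k - 1) (3 ^ k - 1) 0 (by omega) (by omega) (by omega) (by omega),
      smul_zero, mul_zero, mul_smul_comm,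
      hmul' 0 0 0 (by omega) (by omega) (by omega) (by omega)]
    rw [Nat.choose_self, Nat.cast_one, one_smul, zero_sub, ← neg_smul]
    have : (-(2 : K)) = 1 := by linear_combination -h3K
    rw [this, one_smul]
  -- ψ (e 2) c = 0
  have h2q : ψ (e ⟨2, by omega⟩) (e ⟨2 * 3 ^ k - 3, by omega⟩) = 0 := by
    rw [hψ, hiter0 (3 ^ k - 1) 2 (by omega) (by omega), hiter0 (3 ^ k) 2 (by omega) (by omega)]
    simp
  -- ψ a c = 0
  have hac : ψ (e ⟨3 ^ k, by omega⟩) (e ⟨2 * 3 ^ k - 3, by omega⟩) = 0 := by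
    rw [hψ,
      hiterP (3 ^ k - 1) (3 ^ k) 1 (by omega) (by omega) (by omega) (by omega),
      hiterP (3 ^ k) (2 * 3 ^ k - 3) (3 ^ k - 3) (by omega) (by omega) (by omega) (by omega),
      hiterP (3 ^ k) (3 ^ k) 0 (by omega) (by omega) (by omega) (by omega),
      hiterP (3 ^ k - 1) (2 * 3 ^ k - 3) (3 ^ k - 2) (by omega) (by omega) (by omega) (by omega),
      hmul' 1 (3 ^ k - 3) (3 ^ k - 2) (by omega) (by omega) (by omega) (by omega),
      hmul' 0 (3 ^ k - 2) (3 ^ k - 2) (by omega) (by omega) (by omega) (by omega),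
      ← sub_smul]
    rw [Nat.choose_one_right, Nat.choose_zero_right, Nat.cast_one,
      Nat.cast_sub (show 2 ≤ 3 ^ k by omega), hqK]
    push_cast
    have : ((0 : K) - 2 - 1) = 0 := by linear_combination -h3K
    rw [this, zero_smul]
  -- ψ b 0 = 0
  have hb0 : ψ (e ⟨3 ^ k + 1, by omega⟩) (0 : A) = 0 := by
    rw [hψ, hD0, hD0]
    simp
  rw [hbc, habc, hab, h2q, hac, hb0]
  simpa using e.ne_zero ⟨0, by omega⟩
end

section
/- Let A be a vector space and ω : A^n → A a skew-symmetric multilinear map. Suppose a₁,…,a_{n−1}, b₁,…,b_n ∈ A are such that the span of {a₁,…,a_{n−1}} is contained in the span of {b₁,…,b_n}. Then the Leibniz defect ω(a₁,…,a_{n−1}, ω(b₁,…,b_n)) − Σ_{i=1}^n ω(b₁,…,b_{i−1}, ω(a₁,…,a_{n−1}, b_i), b_{i+1},…,b_n) vanishes. -/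
/-- The Leibniz defect vanishes when the first tuple is drawn from the second one. -/
lemma stmt_8_aux (K A : Type*) [Field K] [AddCommGroup A] [Module K A] (n : ℕ)
    (ω : A [⋀^Fin (n + 1)]→ₗ[K] A) (b : Fin (n + 1) → A) (f : Fin n → Fin (n + 1)) :
    ω (Fin.snoc (b ∘ f) (ω b))
      - ∑ i : Fin (n + 1), ω (Function.update b i (ω (Fin.snoc (b ∘ f) (b i)))) = 0 := by
  by_cases hf : Function.Injective f
  · -- there is a unique index `k` missed by `f`
    have hk : ∃ k, ∀ j, f j ≠ k := by
      by_contra hc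
      push_neg at hc
      have hsurj : Function.Surjective f := fun k => hc k
      have := Fintype.card_le_of_surjective f hsurj
      simp at this
    obtain ⟨k, hk⟩ := hk
    -- extend `f` to a permutation `σ` of `Fin (n+1)` sending `last` to `k`
    have hgbij : Function.Bijective (Fin.snoc f k : Fin (n + 1) → Fin (n + 1)) := by
      apply Finite.injective_iff_bijective.mp
      intro x y hxy
      induction x using Fin.lastCases with
      | last =>
        induction y using Fin.lastCases with
        | last => rfl
        | cast j =>
          simp only [Fin.snoc_last, Fin.snoc_castSucc] at hxy
          exact absurd hxy.symm (hk j)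
      | cast i =>
        induction y using Fin.lastCases with
        | last =>
          simp only [Fin.snoc_last, Fin.snoc_castSucc] at hxy
          exact absurd hxy (hk i)
        | cast j =>
          simp only [Fin.snoc_castSucc] at hxy
          exact congrArg Fin.castSucc (hf hxy)
    let σ : Equiv.Perm (Fin (n + 1)) := Equiv.ofBijective _ hgbij
    have hσapp : ∀ x, σ x = (Fin.snoc f k : Fin (n + 1) → Fin (n + 1)) x := fun x => rfl
    have hσc : ∀ i : Fin n, σ i.castSucc = f i := fun i => by
      rw [hσapp, Fin.snoc_castSucc]
    have hσl : σ (Fin.last n) = k := by rw [hσapp, Fin.snoc_last]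
    have key : ∀ x : A, Fin.snoc (b ∘ f) x = (Function.update b k x) ∘ σ := by
      intro x
      funext j
      induction j using Fin.lastCases with
      | last =>
        show (Fin.snoc (b ∘ f) x : Fin (n + 1) → A) (Fin.last n) = Function.update b k x (σ (Fin.last n))
        rw [hσl, Fin.snoc_last, Function.update_self]
      | cast i =>
        show (Fin.snoc (b ∘ f) x : Fin (n + 1) → A) i.castSucc = Function.update b k x (σ i.castSucc)
        rw [hσc, Fin.snoc_castSucc, Function.update_of_ne (hk i)]
        rfl
    have hperm : ∀ x : A, ω (Fin.snoc (b ∘ f) x)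
        = Equiv.Perm.sign σ • ω (Function.update b k x) := by
      intro x
      rw [key x, AlternatingMap.map_perm]
    set s : ℤˣ := Equiv.Perm.sign σ with hs
    -- all summands with `i ≠ k` vanish
    have hzero : ∀ i, i ≠ k → ω (Function.update b i (ω (Fin.snoc (b ∘ f) (b i)))) = 0 := by
      intro i hi
      have h1 : ω (Function.update b k (b i)) = 0 := by
        apply AlternatingMap.map_eq_zero_of_eq ω _ (i := k) (j := i)
        · rw [Function.update_self, Function.update_of_ne hi]
        · exact Ne.symm hi
      rw [hperm, h1, smul_zero]
      exact AlternatingMap.map_update_zero ω b i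
    rw [Finset.sum_eq_single k (fun i _ hi => hzero i hi) (by simp)]
    have hbk : Function.update b k (b k) = b := Function.update_eq_self k b
    have h2 : ω (Fin.snoc (b ∘ f) (b k)) = s • ω b := by
      rw [hperm, hbk]
    rw [h2, hperm]
    rcases Int.units_eq_one_or s with h | h <;> rw [h] <;> simp
  · -- `f` is not injective, so everything vanishes
    simp only [Function.Injective] at hf
    push_neg at hf
    obtain ⟨i, j, hfe, hne⟩ := hf
    have hzero : ∀ x : A, ω (Fin.snoc (b ∘ f) x) = 0 := by
      intro x
      apply AlternatingMap.map_eq_zero_of_eq ω _ (i := Fin.castSucc i) (j := Fin.castSucc j)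
      · simp [Fin.snoc_castSucc, hfe]
      · simpa using hne
    rw [hzero]
    have : ∀ i' : Fin (n + 1), ω (Function.update b i' (ω (Fin.snoc (b ∘ f) (b i')))) = 0 := by
      intro i'
      rw [hzero]
      exact AlternatingMap.map_update_zero ω b i'
    simp [this]

/-- Let `ω` be a skew-symmetric multilinear (n+1)-ary map on a vector space `A`.
If the span of `{a₁,…,aₙ}` is contained in the span of `{b₁,…,b_{n+1}}`, then the
Leibniz defect
`ω(a₁,…,aₙ, ω(b₁,…,b_{n+1})) − Σᵢ ω(b₁,…,ω(a₁,…,aₙ,bᵢ),…,b_{n+1})` vanishes. -/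
theorem stmt_8 (K A : Type*) [Field K] [AddCommGroup A] [Module K A] (n : ℕ)
    (ω : A [⋀^Fin (n + 1)]→ₗ[K] A) (a : Fin n → A) (b : Fin (n + 1) → A)
    (h : Submodule.span K (Set.range a) ≤ Submodule.span K (Set.range b)) :
    ω (Fin.snoc a (ω b))
      - ∑ i : Fin (n + 1), ω (Function.update b i (ω (Fin.snoc a (b i)))) = 0 := by
  classical
  -- the Leibniz defect as a multilinear map in `a`
  set D : MultilinearMap K (fun _ : Fin n => A) A :=
    (LinearMap.applyₗ (ω b)).compMultilinearMap ω.toMultilinearMap.curryRight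
      - ∑ i : Fin (n + 1),
        ((ω.toMultilinearMap.toLinearMap b i).comp
          (LinearMap.applyₗ (b i))).compMultilinearMap ω.toMultilinearMap.curryRight
    with hD
  have hD_apply : ∀ v : Fin n → A, D v = ω (Fin.snoc v (ω b))
      - ∑ i : Fin (n + 1), ω (Function.update b i (ω (Fin.snoc v (b i)))) := by
    intro v
    simp [hD, MultilinearMap.sum_apply, MultilinearMap.curryRight_apply]
  rw [← hD_apply]
  -- express each `a j` as a linear combination of the `b i`
  have hmem : ∀ j, a j ∈ Submodule.span K (Set.range b) :=
    fun j => h (Submodule.subset_span ⟨j, rfl⟩)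
  choose c hc using fun j => (Submodule.mem_span_range_iff_exists_fun K).mp (hmem j)
  have ha : a = fun j => ∑ i : Fin (n + 1), c j i • b i := by
    funext j; rw [hc j]
  rw [ha, D.map_sum]
  apply Finset.sum_eq_zero
  intro r _
  have : (fun j => c j (r j) • b (r j)) = fun j => c j (r j) • (b ∘ r) j := rfl
  rw [this, D.map_smul_univ]
  have hbr : D (b ∘ r) = 0 := by
    rw [hD_apply]
    exact stmt_8_aux K A n ω b r
  rw [hbr, smul_zero]
end

section
/- Let U be a commutative ring of characteristic 3 with derivation ∂. Then V^{1,2,3}(u₁,u₂,u₃) = det(∂ⁱuⱼ)_{1≤i≤3, 1≤j≤3} is a 3-Lie multiplication on U: it is alternating and V(a₁,a₂, V(b₁,b₂,b₃)) = V(V(a₁,a₂,b₁), b₂, b₃) + V(b₁, V(a₁,a₂,b₂), b₃) + V(b₁, b₂, V(a₁,a₂,b₃)) for all elements. -/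
/-- The generalized Wronskian `V^{1,2,3}(u₁,u₂,u₃) = det(D^r u_s)`, `r = 1,2,3`. -/
def V123 {U : Type*} [CommRing U] (D : U → U) (u : Fin 3 → U) : U :=
  (Matrix.of fun r s : Fin 3 => D^[(r : ℕ) + 1] (u s)).det

private lemma V123_eq {U : Type*} [CommRing U] (D : U → U) (u : Fin 3 → U) :
    V123 D u =
      D (u 0) * (D (D (u 1)) * D (D (D (u 2)))) -
      D (u 0) * (D (D (u 2)) * D (D (D (u 1)))) -
      D (u 1) * (D (D (u 0)) * D (D (D (u 2)))) +
      D (u 2) * (D (D (u 0)) * D (D (D (u 1)))) +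
      D (u 1) * (D (D (u 2)) * D (D (D (u 0)))) -
      D (u 2) * (D (D (u 1)) * D (D (D (u 0)))) := by
  simp only [V123, Matrix.det_fin_three, Matrix.of_apply, Fin.isValue, Fin.val_zero,
    Fin.val_one, Fin.val_two, Function.iterate_succ_apply', Function.iterate_zero_apply,
    Function.iterate_one]
  ring

/-- In a commutative ring `U` of characteristic 3 with derivation `D`, `V^{1,2,3}`
is a 3-Lie multiplication: it is alternating and satisfies the Filippov identity. -/
theorem stmt_11 (U : Type*) [CommRing U] (h3 : (3 : U) = 0) (D : U → U)
    (hadd : ∀ a b : U, D (a + b) = D a + D b)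
    (hleib : ∀ a b : U, D (a * b) = D a * b + a * D b) :
    (∀ (u : Fin 3 → U) (i j : Fin 3), i ≠ j → u i = u j → V123 D u = 0) ∧
    (∀ (a : Fin 2 → U) (b : Fin 3 → U),
      V123 D (Fin.snoc a (V123 D b)) =
        ∑ i : Fin 3, V123 D (Function.update b i (V123 D (Fin.snoc a (b i))))) := by
  have hsub : ∀ x y : U, D (x - y) = D x - D y := by
    intro x y
    have h := hadd (x - y) y
    rw [sub_add_cancel] at h
    linear_combination -h
  constructor
  · intro u i j hij hu
    exact Matrix.det_zero_of_column_eq hij (fun k => by rw [Matrix.of_apply, Matrix.of_apply, hu])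
  · intro a b
    rw [Fin.sum_univ_three]
    simp only [V123_eq]
    have e0 : ∀ X : U, (Fin.snoc a X : Fin 3 → U) 0 = a 0 := fun _ => rfl
    have e1 : ∀ X : U, (Fin.snoc a X : Fin 3 → U) 1 = a 1 := fun _ => rfl
    have e2 : ∀ X : U, (Fin.snoc a X : Fin 3 → U) 2 = X := fun _ => rfl
    have u00 : ∀ X : U, Function.update b 0 X 0 = X := fun _ => rfl
    have u01 : ∀ X : U, Function.update b 0 X 1 = b 1 := fun _ => rfl
    have u02 : ∀ X : U, Function.update b 0 X 2 = b 2 := fun _ => rfl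
    have u10 : ∀ X : U, Function.update b 1 X 0 = b 0 := fun _ => rfl
    have u11 : ∀ X : U, Function.update b 1 X 1 = X := fun _ => rfl
    have u12 : ∀ X : U, Function.update b 1 X 2 = b 2 := fun _ => rfl
    have u20 : ∀ X : U, Function.update b 2 X 0 = b 0 := fun _ => rfl
    have u21 : ∀ X : U, Function.update b 2 X 1 = b 1 := fun _ => rfl
    have u22 : ∀ X : U, Function.update b 2 X 2 = X := fun _ => rfl
    simp only [e0, e1, e2, u00, u01, u02, u10, u11, u12, u20, u21, u22]
    simp only [hsub, hadd, hleib]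
    linear_combination ((D (a 0)) * (D (D (a 1))) * (D (b 0)) * (D (D (D (b 1)))) * (D (D (D (D (D (b 2))))))
  - (D (a 0)) * (D (D (a 1))) * (D (b 0)) * (D (D (D (D (D (b 1)))))) * (D (D (D (b 2))))
  - (D (a 0)) * (D (D (a 1))) * (D (D (D (b 0)))) * (D (b 1)) * (D (D (D (D (D (b 2))))))
  + (D (a 0)) * (D (D (a 1))) * (D (D (D (D (D (b 0)))))) * (D (b 1)) * (D (D (D (b 2))))
  + (D (a 0)) * (D (D (a 1))) * (D (D (D (b 0)))) * (D (D (D (D (D (b 1)))))) * (D (b 2))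
  - (D (a 0)) * (D (D (a 1))) * (D (D (D (D (D (b 0)))))) * (D (D (D (b 1)))) * (D (b 2))
  - (D (a 0)) * (D (D (D (a 1)))) * (D (b 0)) * (D (D (b 1))) * (D (D (D (D (D (b 2))))))
  + (D (a 0)) * (D (D (D (a 1)))) * (D (b 0)) * (D (D (D (D (D (b 1)))))) * (D (D (b 2)))
  + (D (a 0)) * (D (D (D (a 1)))) * (D (D (b 0))) * (D (b 1)) * (D (D (D (D (D (b 2))))))
  - (D (a 0)) * (D (D (D (a 1)))) * (D (D (D (D (D (b 0)))))) * (D (b 1)) * (D (D (b 2)))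
  - (D (a 0)) * (D (D (D (a 1)))) * (D (D (b 0))) * (D (D (D (D (D (b 1)))))) * (D (b 2))
  + (D (a 0)) * (D (D (D (a 1)))) * (D (D (D (D (D (b 0)))))) * (D (D (b 1))) * (D (b 2))
  - (D (D (a 0))) * (D (a 1)) * (D (b 0)) * (D (D (D (b 1)))) * (D (D (D (D (D (b 2))))))
  + (D (D (a 0))) * (D (a 1)) * (D (b 0)) * (D (D (D (D (D (b 1)))))) * (D (D (D (b 2))))
  + (D (D (a 0))) * (D (a 1)) * (D (D (D (b 0)))) * (D (b 1)) * (D (D (D (D (D (b 2))))))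
  - (D (D (a 0))) * (D (a 1)) * (D (D (D (D (D (b 0)))))) * (D (b 1)) * (D (D (D (b 2))))
  - (D (D (a 0))) * (D (a 1)) * (D (D (D (b 0)))) * (D (D (D (D (D (b 1)))))) * (D (b 2))
  + (D (D (a 0))) * (D (a 1)) * (D (D (D (D (D (b 0)))))) * (D (D (D (b 1)))) * (D (b 2))
  + (D (D (D (a 0)))) * (D (a 1)) * (D (b 0)) * (D (D (b 1))) * (D (D (D (D (D (b 2))))))
  - (D (D (D (a 0)))) * (D (a 1)) * (D (b 0)) * (D (D (D (D (D (b 1)))))) * (D (D (b 2)))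
  - (D (D (D (a 0)))) * (D (a 1)) * (D (D (b 0))) * (D (b 1)) * (D (D (D (D (D (b 2))))))
  + (D (D (D (a 0)))) * (D (a 1)) * (D (D (D (D (D (b 0)))))) * (D (b 1)) * (D (D (b 2)))
  + (D (D (D (a 0)))) * (D (a 1)) * (D (D (b 0))) * (D (D (D (D (D (b 1)))))) * (D (b 2))
  - (D (D (D (a 0)))) * (D (a 1)) * (D (D (D (D (D (b 0)))))) * (D (D (b 1))) * (D (b 2))
  - (D (a 0)) * (D (D (D (D (D (a 1)))))) * (D (D (b 0))) * (D (b 1)) * (D (D (D (b 2))))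
  + (D (D (D (D (D (a 0)))))) * (D (a 1)) * (D (D (b 0))) * (D (b 1)) * (D (D (D (b 2))))
  + (D (a 0)) * (D (D (D (D (D (a 1)))))) * (D (D (D (b 0)))) * (D (b 1)) * (D (D (b 2)))
  - (D (D (D (D (D (a 0)))))) * (D (a 1)) * (D (D (D (b 0)))) * (D (b 1)) * (D (D (b 2)))
  + (D (a 0)) * (D (D (D (D (D (a 1)))))) * (D (D (b 0))) * (D (D (D (b 1)))) * (D (b 2))
  - (D (D (D (D (D (a 0)))))) * (D (a 1)) * (D (D (b 0))) * (D (D (D (b 1)))) * (D (b 2))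
  - (D (a 0)) * (D (D (D (D (D (a 1)))))) * (D (D (D (b 0)))) * (D (D (b 1))) * (D (b 2))
  + (D (D (D (D (D (a 0)))))) * (D (a 1)) * (D (D (D (b 0)))) * (D (D (b 1))) * (D (b 2))
  + (D (a 0)) * (D (D (D (D (D (a 1)))))) * (D (b 0)) * (D (D (b 1))) * (D (D (D (b 2))))
  - (D (D (D (D (D (a 0)))))) * (D (a 1)) * (D (b 0)) * (D (D (b 1))) * (D (D (D (b 2))))
  - (D (a 0)) * (D (D (D (D (D (a 1)))))) * (D (b 0)) * (D (D (D (b 1)))) * (D (D (b 2)))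
  + (D (D (D (D (D (a 0)))))) * (D (a 1)) * (D (b 0)) * (D (D (D (b 1)))) * (D (D (b 2))))
 * h3
end

section
/- Total weight of the binary Wronskian bracket composition: for a commutative ring U with derivation ∂ and generalized Wronskians V^{α} of weight |α| = α₁ + … + α_k, the alternating double composition Q_alt(V^{0,1,…,k}, V^{0,1,…,l}) lies in the span of generalized Wronskian-type cochains of arity k+l+1 and weight (k²+k+l²+l)/2; since (k²+l²+k+l)/2 < (k+l+1)(k+l)/2 for k, l > 0, it follows that Q_alt(V^{0,1,…,k}, V^{0,1,…,l}) = 0. In particular, the Wronskian algebra (U, V^{0,1,…,k}) is a homotopical (k+1)-Lie algebra: Σ_{σ ∈ Sh(k,k+1)} sign(σ) V(u_{σ(1)},…,u_{σ(k)}, V(u_{σ(k+1)},…,u_{σ(2k+1)})) = 0 for all u₁,…,u_{2k+1} ∈ U. -/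
def gW {U : Type*} [CommRing U] (D : U → U) {k : ℕ} (idx : Fin k → ℕ)
    (u : Fin k → U) : U :=
  (Matrix.of fun r s : Fin k => D^[idx r] (u s)).det

open Finset Equiv

section Deriv

variable {U : Type*} [CommRing U] (D : U → U)
variable (hadd : ∀ a b : U, D (a + b) = D a + D b)
    (hleib : ∀ a b : U, D (a * b) = D a * b + a * D b)

include hadd in
lemma D_sum {ι : Type*} (s : Finset ι) (f : ι → U) :
    D (∑ i ∈ s, f i) = ∑ i ∈ s, D (f i) :=
  map_sum (AddMonoidHom.mk' D hadd) f s

include hadd in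
lemma D_iter_sum {ι : Type*} (m : ℕ) (s : Finset ι) (f : ι → U) :
    D^[m] (∑ i ∈ s, f i) = ∑ i ∈ s, D^[m] (f i) := by
  induction m generalizing f with
  | zero => simp
  | succ m ih =>
    rw [Function.iterate_succ_apply, D_sum D hadd, ih]
    exact sum_congr rfl fun i _ => (Function.iterate_succ_apply D m (f i)).symm

include hadd in
lemma D_zsmul (z : ℤ) (x : U) : D (z • x) = z • D x :=
  map_zsmul (AddMonoidHom.mk' D hadd) z x

include hadd hleib in
lemma D_one : D 1 = 0 := by
  have h := hleib 1 1
  simp only [one_mul, mul_one] at h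
  exact (left_eq_add.mp h)

include hadd hleib in
lemma D_prod {ι : Type*} [DecidableEq ι] (s : Finset ι) (f : ι → U) :
    D (∏ i ∈ s, f i) = ∑ i ∈ s, D (f i) * ∏ j ∈ s.erase i, f j := by
  induction s using Finset.induction_on with
  | empty => simpa using D_one D hadd hleib
  | @insert a s ha ih =>
    rw [prod_insert ha, hleib, ih, sum_insert ha, erase_insert ha, mul_sum]
    congr 1
    refine sum_congr rfl fun i hi => ?_
    have hai : a ≠ i := fun h => ha (h ▸ hi)
    rw [Finset.erase_insert_of_ne hai,
      prod_insert (fun h => ha (Finset.mem_of_mem_erase h))]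
    ring

include hadd hleib in
lemma D_det {m : ℕ} (M : Matrix (Fin m) (Fin m) U) :
    D M.det = ∑ j, (M.updateCol j (fun i => D (M i j))).det := by
  rw [Matrix.det_apply]
  simp only [Units.smul_def]
  rw [D_sum D hadd]
  have key : ∀ σ : Equiv.Perm (Fin m),
      D ((Equiv.Perm.sign σ : ℤ) • ∏ i, M (σ i) i) =
      ∑ j, (Equiv.Perm.sign σ : ℤ) •
        (D (M (σ j) j) * ∏ i ∈ Finset.univ.erase j, M (σ i) i) := by
    intro σ
    rw [D_zsmul D hadd, D_prod D hadd hleib, smul_sum]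
  simp only [key]
  rw [sum_comm]
  refine sum_congr rfl fun j _ => ?_
  rw [Matrix.det_apply]
  simp only [Units.smul_def]
  refine sum_congr rfl fun σ _ => ?_
  congr 1
  rw [← Finset.mul_prod_erase Finset.univ _ (Finset.mem_univ j)]
  congr 1
  · simp [Matrix.updateCol_apply]
  · refine prod_congr rfl fun i hi => ?_
    have : i ≠ j := (Finset.mem_erase.mp hi).1
    simp [Matrix.updateCol_apply, this]

include hadd hleib in
lemma D_det_row {m : ℕ} (M : Matrix (Fin m) (Fin m) U) :
    D M.det = ∑ i, (M.updateRow i (fun j => D (M i j))).det := by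
  rw [← Matrix.det_transpose M, D_det D hadd hleib]
  refine sum_congr rfl fun i _ => ?_
  rw [← Matrix.det_transpose (M.updateRow i fun j => D (M i j))]
  congr 1
  ext p q
  by_cases h : q = i
  · subst h; simp [Matrix.updateCol_apply, Matrix.updateRow_apply, Matrix.transpose_apply]
  · simp [Matrix.updateCol_apply, Matrix.updateRow_apply, Matrix.transpose_apply, h]

end Deriv
section IterGW

variable {U : Type*} [CommRing U] (D : U → U)
variable (hadd : ∀ a b : U, D (a + b) = D a + D b)
    (hleib : ∀ a b : U, D (a * b) = D a * b + a * D b)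

include hadd hleib in
lemma D_gW {m : ℕ} (idx : Fin m → ℕ) (v : Fin m → U) :
    D (gW D idx v) = ∑ r, gW D (Function.update idx r (idx r + 1)) v := by
  rw [gW, D_det_row D hadd hleib]
  refine sum_congr rfl fun r _ => ?_
  rw [gW]
  congr 1
  ext i j
  by_cases h : i = r
  · subst h
    simp [Matrix.updateRow_apply, Function.update_self, Function.iterate_succ_apply']
  · simp [Matrix.updateRow_apply, h, Function.update_of_ne h]

include hadd hleib in
lemma iter_gW {m : ℕ} (r : ℕ) (idx : Fin m → ℕ) (v : Fin m → U) :
    D^[r] (gW D idx v) =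
      ∑ g : Fin r → Fin m, gW D (fun i => idx i + ∑ p, if g p = i then 1 else 0) v := by
  induction r generalizing idx with
  | zero =>
    rw [Fintype.sum_unique]
    simp
  | succ r ih =>
    rw [Function.iterate_succ_apply, D_gW D hadd hleib, D_iter_sum D hadd]
    simp only [ih]
    rw [← (Fin.consEquiv fun _ : Fin (r+1) => Fin m).sum_comp, Fintype.sum_prod_type]
    refine sum_congr rfl fun a _ => sum_congr rfl fun g _ => ?_
    congr 1
    funext i
    simp only [Fin.consEquiv_apply, Fin.sum_univ_succ, Fin.cons_zero, Fin.cons_succ,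
      Function.update_apply]
    by_cases h : i = a
    · subst h; simp [add_assoc]
    · simp [h, Ne.symm h]

lemma cnt_sum {r m : ℕ} (g : Fin r → Fin m) :
    ∑ i : Fin m, (∑ p, if g p = i then 1 else 0 : ℕ) = r := by
  rw [sum_comm]
  simp

end IterGW
section Comb

/-- embedding of the first block -/
def embA (k : ℕ) (p : Fin k) : Fin (2*k+1) := ⟨(p : ℕ), by omega⟩

/-- embedding of the second block -/
def embB (k : ℕ) (q : Fin (k+1)) : Fin (2*k+1) := ⟨k + (q : ℕ), by have hq := q.isLt; exact Nat.add_lt_of_lt_sub (by omega)⟩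

/-- the canonical equivalence -/
def eqv (k : ℕ) : (Fin k ⊕ Fin (k+1)) ≃ Fin (2*k+1) :=
  finSumFinEquiv.trans (finCongr (by omega))

lemma eqv_inl {k : ℕ} (p : Fin k) : eqv k (Sum.inl p) = embA k p := rfl

lemma eqv_inr {k : ℕ} (q : Fin (k+1)) : eqv k (Sum.inr q) = embB k q := rfl

lemma embA_injective {k : ℕ} : Function.Injective (embA k) := by
  intro a b h
  exact Fin.ext (by simpa [embA, Fin.ext_iff] using h)

lemma embB_injective {k : ℕ} : Function.Injective (embB k) := by
  intro a b h
  exact Fin.ext (by simpa [embB, Fin.ext_iff] using h)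

/-- block permutation -/
def bp (k : ℕ) (π₁ : Equiv.Perm (Fin k)) (π₂ : Equiv.Perm (Fin (k+1))) :
    Equiv.Perm (Fin (2*k+1)) :=
  (eqv k).permCongr (Equiv.sumCongr π₁ π₂)

lemma bp_embA {k : ℕ} (π₁ : Equiv.Perm (Fin k)) (π₂ : Equiv.Perm (Fin (k+1))) (p : Fin k) :
    bp k π₁ π₂ (embA k p) = embA k (π₁ p) := by
  rw [← eqv_inl, ← eqv_inl]
  simp [bp, Equiv.permCongr_apply]

lemma bp_embB {k : ℕ} (π₁ : Equiv.Perm (Fin k)) (π₂ : Equiv.Perm (Fin (k+1))) (q : Fin (k+1)) :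
    bp k π₁ π₂ (embB k q) = embB k (π₂ q) := by
  rw [← eqv_inr, ← eqv_inr]
  simp [bp, Equiv.permCongr_apply]

lemma bp_mul {k : ℕ} (π₁ ρ₁ : Equiv.Perm (Fin k)) (π₂ ρ₂ : Equiv.Perm (Fin (k+1))) :
    bp k π₁ π₂ * bp k ρ₁ ρ₂ = bp k (π₁ * ρ₁) (π₂ * ρ₂) := by
  apply Equiv.ext
  intro x
  obtain ⟨y, rfl⟩ : ∃ y, eqv k y = x := ⟨_, (eqv k).apply_symm_apply x⟩
  cases y with
  | inl p => simp [Equiv.Perm.mul_apply, eqv_inl, bp_embA]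
  | inr q => simp [Equiv.Perm.mul_apply, eqv_inr, bp_embB]

lemma bp_one {k : ℕ} : bp k 1 1 = 1 := by
  apply Equiv.ext
  intro x
  obtain ⟨y, rfl⟩ : ∃ y, eqv k y = x := ⟨_, (eqv k).apply_symm_apply x⟩
  cases y with
  | inl p => simp [eqv_inl, bp_embA]
  | inr q => simp [eqv_inr, bp_embB]

lemma sign_bp {k : ℕ} (π₁ : Equiv.Perm (Fin k)) (π₂ : Equiv.Perm (Fin (k+1))) :
    Equiv.Perm.sign (bp k π₁ π₂) = Equiv.Perm.sign π₁ * Equiv.Perm.sign π₂ := by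
  rw [bp, Equiv.Perm.sign_permCongr, Equiv.Perm.sign_sumCongr]

lemma shuffle_iff {k : ℕ} (σ : Equiv.Perm (Fin (2*k+1))) :
    ((∀ i j : Fin (2*k+1), i < j → (j : ℕ) < k → σ i < σ j) ∧
     (∀ i j : Fin (2*k+1), i < j → k ≤ (i : ℕ) → σ i < σ j)) ↔
    (StrictMono fun p => σ (embA k p)) ∧ (StrictMono fun q => σ (embB k q)) := by
  constructor
  · rintro ⟨h1, h2⟩
    constructor
    · intro p p' hpp'
      refine h1 (embA k p) (embA k p') ?_ ?_
      · exact Fin.mk_lt_mk.mpr (Fin.lt_def.mp hpp')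
      · exact p'.isLt
    · intro q q' hqq'
      refine h2 (embB k q) (embB k q') ?_ ?_
      · exact Fin.mk_lt_mk.mpr (by have := Fin.lt_def.mp hqq'; omega)
      · exact Nat.le_add_right k _
  · rintro ⟨h1, h2⟩
    constructor
    · intro i j hij hjk
      have hik : (i : ℕ) < k := lt_trans (Fin.lt_def.mp hij) hjk
      have hi : i = embA k ⟨(i : ℕ), hik⟩ := Fin.ext rfl
      have hj : j = embA k ⟨(j : ℕ), hjk⟩ := Fin.ext rfl
      rw [hi, hj]
      exact h1 (Fin.mk_lt_mk.mpr (Fin.lt_def.mp hij))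
    · intro i j hij hki
      have hjk : (j : ℕ) < 2*k+1 := j.isLt
      have hkj : k ≤ (j : ℕ) := le_trans hki (le_of_lt (Fin.lt_def.mp hij))
      have hik : (i : ℕ) < 2*k+1 := i.isLt
      have hi : i = embB k ⟨(i : ℕ) - k, by omega⟩ :=
        Fin.ext (show (i : ℕ) = k + ((i : ℕ) - k) by omega)
      have hj : j = embB k ⟨(j : ℕ) - k, by omega⟩ :=
        Fin.ext (show (j : ℕ) = k + ((j : ℕ) - k) by omega)
      rw [hi, hj]
      refine h2 ?_
      exact Fin.mk_lt_mk.mpr (by have := Fin.lt_def.mp hij; omega)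

lemma inj_sum_lower : ∀ (m : ℕ) (f : Fin m → ℕ), Function.Injective f →
    ∑ i ∈ Finset.range m, i ≤ ∑ i, f i := by
  intro m
  induction m with
  | zero => simp
  | succ m ih =>
    intro f hf
    obtain ⟨i₀, -, hmax⟩ := Finset.exists_max_image Finset.univ f ⟨0, Finset.mem_univ 0⟩
    have hinj' : Function.Injective (f ∘ i₀.succAbove) :=
      hf.comp (Fin.succAbove_right_injective)
    have h1 := ih _ hinj'
    have h2 : ∑ j, f j = f i₀ + ∑ p, f (i₀.succAbove p) := Fin.sum_univ_succAbove f i₀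
    have h3 : m ≤ f i₀ := by
      have hsub : Finset.image f Finset.univ ⊆ Finset.range (f i₀ + 1) := by
        intro x hx
        obtain ⟨a, -, rfl⟩ := Finset.mem_image.mp hx
        exact Finset.mem_range.mpr (Nat.lt_succ_of_le (hmax a (Finset.mem_univ a)))
      have hcard := Finset.card_le_card hsub
      rw [Finset.card_image_of_injective _ hf, Finset.card_range, Finset.card_univ,
        Fintype.card_fin] at hcard
      omega
    rw [Finset.sum_range_succ]
    have : ∑ p, (f ∘ i₀.succAbove) p = ∑ p, f (i₀.succAbove p) := rfl
    omega

end Comb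
section Laplace

variable {U : Type*} [CommRing U] (D : U → U)
variable (hadd : ∀ a b : U, D (a + b) = D a + D b)
    (hleib : ∀ a b : U, D (a * b) = D a * b + a * D b)

lemma gW_expand {m : ℕ} (idx : Fin m → ℕ) (v : Fin m → U) :
    gW D idx v =
      ∑ π : Equiv.Perm (Fin m), (Equiv.Perm.sign π : ℤ) • ∏ p, D^[idx p] (v (π p)) := by
  rw [gW, ← Matrix.det_transpose, Matrix.det_apply]
  refine Finset.sum_congr rfl fun π _ => ?_
  rw [Units.smul_def]
  rfl

lemma laplace (k : ℕ) (hk : 1 ≤ k) (u : Fin (2*k+1) → U) (α : Fin k → ℕ)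
    (β : Fin (k+1) → ℕ) (hw : (∑ p, α p) + (∑ q, β q) = k * (k+1)) :
    ∑ σ ∈ Finset.univ.filter (fun σ : Equiv.Perm (Fin (2*k+1)) =>
        (∀ i j : Fin (2*k+1), i < j → (j : ℕ) < k → σ i < σ j) ∧
        (∀ i j : Fin (2*k+1), i < j → k ≤ (i : ℕ) → σ i < σ j)),
      (Equiv.Perm.sign σ : ℤ) •
        (gW D β (fun q => u (σ (embB k q))) * gW D α (fun p => u (σ (embA k p)))) = 0 := by
  classical
  set app : Fin (2*k+1) → ℕ := fun c => Sum.elim α β ((eqv k).symm c) with happ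
  set f : Equiv.Perm (Fin (2*k+1)) → U :=
    fun τ => (Equiv.Perm.sign τ : ℤ) • ∏ c, D^[app c] (u (τ c)) with hf
  have happA : ∀ p, app (embA k p) = α p := fun p => by
    rw [happ, ← eqv_inl]; simp
  have happB : ∀ q, app (embB k q) = β q := fun q => by
    rw [happ, ← eqv_inr]; simp
  have step1 : ∀ σ : Equiv.Perm (Fin (2*k+1)),
      (Equiv.Perm.sign σ : ℤ) •
        (gW D β (fun q => u (σ (embB k q))) * gW D α (fun p => u (σ (embA k p)))) =
      ∑ x : Equiv.Perm (Fin k) × Equiv.Perm (Fin (k+1)), f (σ * bp k x.1 x.2) := by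
    intro σ
    rw [gW_expand D, gW_expand D, Finset.sum_mul_sum, Fintype.sum_prod_type, Finset.smul_sum]
    simp only [Finset.smul_sum]
    rw [Finset.sum_comm]
    refine Finset.sum_congr rfl fun π₁ _ => Finset.sum_congr rfl fun π₂ _ => ?_
    have hsign : (Equiv.Perm.sign (σ * bp k π₁ π₂) : ℤ) =
        (Equiv.Perm.sign σ : ℤ) * ((Equiv.Perm.sign π₁ : ℤ) * (Equiv.Perm.sign π₂ : ℤ)) := by
      rw [Equiv.Perm.sign_mul, sign_bp]
      push_cast
      ring
    have hprod : ∏ c, D^[app c] (u ((σ * bp k π₁ π₂) c)) =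
        (∏ p, D^[α p] (u (σ (embA k (π₁ p))))) *
          (∏ q, D^[β q] (u (σ (embB k (π₂ q))))) := by
      rw [← Equiv.prod_comp (eqv k) (fun c => D^[app c] (u ((σ * bp k π₁ π₂) c))),
        Fintype.prod_sum_type]
      congr 1
      · refine Finset.prod_congr rfl fun p _ => ?_
        rw [eqv_inl, happA, Equiv.Perm.mul_apply, bp_embA]
      · refine Finset.prod_congr rfl fun q _ => ?_
        rw [eqv_inr, happB, Equiv.Perm.mul_apply, bp_embB]
    simp only [hf]
    rw [hsign, hprod, smul_mul_smul_comm, smul_smul,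
      mul_comm (∏ q, D^[β q] (u (σ (embB k (π₂ q))))) (∏ p, D^[α p] (u (σ (embA k (π₁ p)))))]
    congr 1
    ring
  rw [Finset.sum_congr rfl fun σ _ => step1 σ]
  have step2 : ∑ y ∈ (Finset.univ.filter (fun σ : Equiv.Perm (Fin (2*k+1)) =>
        (∀ i j : Fin (2*k+1), i < j → (j : ℕ) < k → σ i < σ j) ∧
        (∀ i j : Fin (2*k+1), i < j → k ≤ (i : ℕ) → σ i < σ j))) ×ˢ
        (Finset.univ : Finset (Equiv.Perm (Fin k) × Equiv.Perm (Fin (k+1)))),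
      f (y.1 * bp k y.2.1 y.2.2) = ∑ τ : Equiv.Perm (Fin (2*k+1)), f τ := by
    refine Finset.sum_nbij' (fun y => y.1 * bp k y.2.1 y.2.2)
      (fun τ => (τ * bp k (Tuple.sort fun p => τ (embA k p)) (Tuple.sort fun q => τ (embB k q)),
        (Tuple.sort fun p => τ (embA k p))⁻¹, (Tuple.sort fun q => τ (embB k q))⁻¹))
      (fun y _ => Finset.mem_univ _) ?_ ?_ ?_ (fun y _ => rfl)
    · -- membership of the inverse image
      intro τ _
      rw [Finset.mem_product]
      refine ⟨Finset.mem_filter.mpr ⟨Finset.mem_univ _, (shuffle_iff _).mpr ⟨?_, ?_⟩⟩,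
        Finset.mem_univ _⟩
      · have he : (fun p => (τ * bp k (Tuple.sort fun p => τ (embA k p))
            (Tuple.sort fun q => τ (embB k q))) (embA k p)) =
            (fun p => τ (embA k p)) ∘ ⇑(Tuple.sort fun p => τ (embA k p)) := by
          funext p
          rw [Equiv.Perm.mul_apply, bp_embA]
          rfl
        rw [he]
        refine Monotone.strictMono_of_injective (Tuple.monotone_sort _) ?_
        exact (τ.injective.comp embA_injective).comp (Tuple.sort _).injective
      · have he : (fun q => (τ * bp k (Tuple.sort fun p => τ (embA k p))
            (Tuple.sort fun q => τ (embB k q))) (embB k q)) =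
            (fun q => τ (embB k q)) ∘ ⇑(Tuple.sort fun q => τ (embB k q)) := by
          funext q
          rw [Equiv.Perm.mul_apply, bp_embB]
          rfl
        rw [he]
        refine Monotone.strictMono_of_injective (Tuple.monotone_sort _) ?_
        exact (τ.injective.comp embB_injective).comp (Tuple.sort _).injective
    · -- left inverse
      rintro ⟨σ, π₁, π₂⟩ hy
      rw [Finset.mem_product, Finset.mem_filter] at hy
      obtain ⟨⟨-, hsh⟩, -⟩ := hy
      rw [shuffle_iff] at hsh
      have hfA : (fun p => (σ * bp k π₁ π₂) (embA k p)) = fun p => σ (embA k (π₁ p)) := by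
        funext p; rw [Equiv.Perm.mul_apply, bp_embA]
      have hfB : (fun q => (σ * bp k π₁ π₂) (embB k q)) = fun q => σ (embB k (π₂ q)) := by
        funext q; rw [Equiv.Perm.mul_apply, bp_embB]
      have hs1 : Tuple.sort (fun p => σ (embA k (π₁ p))) = π₁⁻¹ := by
        symm
        rw [Tuple.eq_sort_iff]
        constructor
        · intro a b hab
          have : ∀ c, σ (embA k (π₁ (π₁⁻¹ c))) = σ (embA k c) := fun c => by
            rw [Equiv.Perm.inv_def, Equiv.apply_symm_apply]
          simp only [Function.comp_apply, this]
          exact (hsh.1.monotone) hab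
        · intro a b hab heq
          exfalso
          have := σ.injective (heq)
          have := embA_injective this
          have := π₁.injective this
          have hab2 : a = b := π₁⁻¹.injective (by exact this)
          exact absurd hab2 (ne_of_lt hab)
      have hs2 : Tuple.sort (fun q => σ (embB k (π₂ q))) = π₂⁻¹ := by
        symm
        rw [Tuple.eq_sort_iff]
        constructor
        · intro a b hab
          have : ∀ c, σ (embB k (π₂ (π₂⁻¹ c))) = σ (embB k c) := fun c => by
            rw [Equiv.Perm.inv_def, Equiv.apply_symm_apply]
          simp only [Function.comp_apply, this]
          exact (hsh.2.monotone) hab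
        · intro a b hab heq
          exfalso
          have := σ.injective (heq)
          have := embB_injective this
          have := π₂.injective this
          have hab2 : a = b := π₂⁻¹.injective (by exact this)
          exact absurd hab2 (ne_of_lt hab)
      simp only [hfA, hfB, hs1, hs2]
      refine Prod.ext ?_ (Prod.ext ?_ ?_)
      · show σ * bp k π₁ π₂ * bp k π₁⁻¹ π₂⁻¹ = σ
        rw [mul_assoc, bp_mul, mul_inv_cancel, mul_inv_cancel, bp_one, mul_one]
      · show (π₁⁻¹)⁻¹ = π₁
        exact inv_inv π₁
      · show (π₂⁻¹)⁻¹ = π₂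
        exact inv_inv π₂
    · -- right inverse
      intro τ _
      show τ * bp k _ _ * bp k _ _ = τ
      rw [mul_assoc, bp_mul, mul_inv_cancel, mul_inv_cancel, bp_one, mul_one]
  rw [← Finset.sum_product', step2]
  -- the total sum is the determinant of a matrix with a repeated column
  have hdet : ∑ τ : Equiv.Perm (Fin (2*k+1)), f τ =
      (Matrix.of fun r c : Fin (2*k+1) => D^[app c] (u r)).det := by
    rw [Matrix.det_apply]
    refine Finset.sum_congr rfl fun τ _ => ?_
    rw [Units.smul_def]
    rfl
  rw [hdet]
  have hnotinj : ¬ Function.Injective app := by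
    intro hinj
    have h1 := inj_sum_lower _ app hinj
    have h2 : ∑ c, app c = (∑ p, α p) + (∑ q, β q) := by
      rw [← Equiv.sum_comp (eqv k) app, Fintype.sum_sum_type]
      congr 1
      · exact Finset.sum_congr rfl fun p _ => by rw [eqv_inl, happA]
      · exact Finset.sum_congr rfl fun q _ => by rw [eqv_inr, happB]
    rw [h2, hw] at h1
    have h3 := Finset.sum_range_id_mul_two (2*k+1)
    have e2 : (2*k+1) * (2*k+1-1) = 4*(k*k) + 2*k := by
      have h4 : 2*k+1-1 = 2*k := by omega
      rw [h4]; ring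
    rw [e2] at h3
    have e1 : k*(k+1) = k*k + k := by ring
    rw [e1] at h1
    have hk2 : 1*1 ≤ k*k := Nat.mul_le_mul hk hk
    generalize k*k = K at h1 h3 hk2
    omega
  obtain ⟨c, c', heq, hne⟩ := Function.not_injective_iff.mp hnotinj
  exact Matrix.det_zero_of_column_eq hne fun r => by simp [heq]

end Laplace
section Main

variable {U : Type*} [CommRing U] (D : U → U)
variable (hadd : ∀ a b : U, D (a + b) = D a + D b)
    (hleib : ∀ a b : U, D (a * b) = D a * b + a * D b)

lemma outer_expand (k : ℕ) (v : Fin k → U) (w : U) :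
    gW D (fun r : Fin (k+1) => (r : ℕ)) (Fin.snoc v w) =
      ∑ i : Fin (k+1), (-1 : U) ^ ((i : ℕ) + k) * D^[(i : ℕ)] w *
        gW D (fun p : Fin k => ((i.succAbove p : Fin (k+1)) : ℕ)) v := by
  rw [gW, Matrix.det_succ_column _ (Fin.last k)]
  refine Finset.sum_congr rfl fun i _ => ?_
  congr 1
  · rw [Fin.val_last]
    congr 1
    simp only [Matrix.of_apply, Fin.snoc_last]
  · rw [gW]
    congr 1
    ext p q
    simp only [Matrix.submatrix_apply, Matrix.of_apply, Fin.succAbove_last, Fin.snoc_castSucc]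

end Main

/-- The Wronskian algebra `(U, V^{0,1,…,k})` is homotopical `(k+1)`-Lie: for any
commutative ring `U` with derivation `D` and `k ≥ 1`, the sum over all
`(k, k+1)`-shuffles `σ` of `sign(σ)·V(u_{σ(1)},…,u_{σ(k)}, V(u_{σ(k+1)},…,u_{σ(2k+1)}))`
vanishes, where `V = V^{0,1,…,k}`. -/
theorem stmt_17 (U : Type*) [CommRing U] (D : U → U)
    (hadd : ∀ a b : U, D (a + b) = D a + D b)
    (hleib : ∀ a b : U, D (a * b) = D a * b + a * D b)
    (k : ℕ) (hk : 1 ≤ k) (u : Fin (2 * k + 1) → U) :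
    ∑ σ ∈ Finset.univ.filter (fun σ : Equiv.Perm (Fin (2 * k + 1)) =>
        (∀ i j : Fin (2 * k + 1), i < j → (j : ℕ) < k → σ i < σ j) ∧
        (∀ i j : Fin (2 * k + 1), i < j → k ≤ (i : ℕ) → σ i < σ j)),
      (Equiv.Perm.sign σ : ℤ) •
        gW D (fun r : Fin (k + 1) => (r : ℕ))
          (Fin.snoc (fun i : Fin k => u (σ ⟨(i : ℕ), by have := i.isLt; omega⟩))
            (gW D (fun r : Fin (k + 1) => (r : ℕ))
              (fun i : Fin (k + 1) => u (σ ⟨k + (i : ℕ), by have := i.isLt; omega⟩)))) = 0 := by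
  classical
  show ∑ σ ∈ Finset.univ.filter (fun σ : Equiv.Perm (Fin (2 * k + 1)) =>
        (∀ i j : Fin (2 * k + 1), i < j → (j : ℕ) < k → σ i < σ j) ∧
        (∀ i j : Fin (2 * k + 1), i < j → k ≤ (i : ℕ) → σ i < σ j)),
      (Equiv.Perm.sign σ : ℤ) •
        gW D (fun r : Fin (k + 1) => (r : ℕ))
          (Fin.snoc (fun i : Fin k => u (σ (embA k i)))
            (gW D (fun r : Fin (k + 1) => (r : ℕ))
              (fun i : Fin (k + 1) => u (σ (embB k i))))) = 0
  have key : ∀ σ : Equiv.Perm (Fin (2 * k + 1)),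
      (Equiv.Perm.sign σ : ℤ) •
        gW D (fun r : Fin (k + 1) => (r : ℕ))
          (Fin.snoc (fun i : Fin k => u (σ (embA k i)))
            (gW D (fun r : Fin (k + 1) => (r : ℕ))
              (fun i : Fin (k + 1) => u (σ (embB k i))))) =
      ∑ i : Fin (k+1), ∑ g : Fin (i : ℕ) → Fin (k+1),
        (-1 : U) ^ ((i : ℕ) + k) *
          ((Equiv.Perm.sign σ : ℤ) •
            (gW D (fun j : Fin (k+1) => (j : ℕ) + ∑ p, if g p = j then 1 else 0)
                (fun q => u (σ (embB k q))) *
             gW D (fun p : Fin k => ((i.succAbove p : Fin (k+1)) : ℕ))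
                (fun p => u (σ (embA k p))))) := by
    intro σ
    rw [outer_expand D k]
    rw [Finset.smul_sum]
    refine Finset.sum_congr rfl fun i _ => ?_
    rw [iter_gW D hadd hleib]
    rw [mul_assoc, Finset.sum_mul, Finset.mul_sum, Finset.smul_sum]
    refine Finset.sum_congr rfl fun g _ => ?_
    exact (mul_smul_comm _ _ _).symm
  rw [Finset.sum_congr rfl fun σ _ => key σ]
  rw [Finset.sum_comm]
  refine Finset.sum_eq_zero fun i _ => ?_
  rw [Finset.sum_comm]
  refine Finset.sum_eq_zero fun g _ => ?_
  rw [← Finset.mul_sum]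
  have hw : (∑ p : Fin k, ((i.succAbove p : Fin (k+1)) : ℕ)) +
      (∑ j : Fin (k+1), ((j : ℕ) + ∑ p, if g p = j then 1 else 0)) = k * (k+1) := by
    have hT := Fin.sum_univ_succAbove (fun j : Fin (k+1) => (j : ℕ)) i
    have hβ : (∑ j : Fin (k+1), ((j : ℕ) + ∑ p, if g p = j then 1 else 0)) =
        (∑ j : Fin (k+1), (j : ℕ)) + (i : ℕ) := by
      rw [Finset.sum_add_distrib, cnt_sum g]
    have h2T : (∑ j : Fin (k+1), (j : ℕ)) * 2 = (k+1) * k := by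
      rw [Fin.sum_univ_eq_sum_range (fun j => j) (k+1)]
      simpa using Finset.sum_range_id_mul_two (k+1)
    have hcomm : (k+1) * k = k * (k+1) := Nat.mul_comm _ _
    omega
  rw [laplace D k hk u _ _ hw, mul_zero]
end
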